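/- Let X₁, …, X_T be real-valued random variables (not necessarily independent) on a probability space such that for each t, |log(1 + X_t)| ≤ c almost surely and E[(log(1 + X_t))²] ≤ v². If v² ≤ min{1, (4T²·(e^{2Tc} - 2Tc - 1)/(4T²c²))^{-1}}, then E[(∏_{t=1}^T (1 + X_t) - 1)²] ≤ v²·(4 + 64T²·(e^{2Tc} - 2Tc - 1)/(4T²c²)). -/

import Mathlib

/-!
Write `S = ∑ₜ log (1 + Xₜ)`, so that `∏ₜ (1 + Xₜ) = exp S` with `|S| ≤ T c`. Pointwise,
`(exp S - 1)² ≤ exp (2S) - 2S - 1`, and since `(exp x - x - 1) / x²` is increasing in `|x|`,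
the right-hand side is at most `4 S² g` with `g = (exp (2Tc) - 2Tc - 1) / (2Tc)²`.
Cauchy–Schwarz gives `S² ≤ T ∑ₜ log (1 + Xₜ)²`, and taking expectations yields
`E[(∏ₜ (1 + Xₜ) - 1)²] ≤ 4 g T² v²`, which is below the claimed bound.
-/

open MeasureTheory Real Finset

namespace Real

theorem exp_sub_sub_one_eq_tsum (x : ℝ) :
    exp x - x - 1 = ∑' n : ℕ, x ^ (n + 2) / (n + 2).factorial := by
  rw [exp_eq_exp_ℝ, NormedSpace.exp_eq_tsum_div]
  beta_reduce
  rw [← (summable_pow_div_factorial x).sum_add_tsum_nat_add 2]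
  simp [Finset.sum_range_succ]
  ring

theorem sq_mul_exp_sub_sub_one_le {a b : ℝ} (ha : 0 ≤ a) (hab : a ≤ b) :
    b ^ 2 * (exp a - a - 1) ≤ a ^ 2 * (exp b - b - 1) := by
  have hsummable (x : ℝ) : Summable fun n : ℕ => x ^ (n + 2) / (n + 2).factorial :=
    (summable_nat_add_iff 2).mpr (summable_pow_div_factorial x)
  rw [exp_sub_sub_one_eq_tsum, exp_sub_sub_one_eq_tsum, ← tsum_mul_left, ← tsum_mul_left]
  refine Summable.tsum_le_tsum (fun n => ?_) ((hsummable a).mul_left _) ((hsummable b).mul_left _)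
  rw [mul_div_assoc', mul_div_assoc']
  gcongr ?_ / _
  calc b ^ 2 * a ^ (n + 2) = a ^ 2 * b ^ 2 * a ^ n := by ring
    _ ≤ a ^ 2 * b ^ 2 * b ^ n := by gcongr
    _ = a ^ 2 * b ^ (n + 2) := by ring

theorem exp_sub_sub_one_le_exp_abs (y : ℝ) : exp y - y - 1 ≤ exp |y| - |y| - 1 := by
  rcases le_or_gt 0 y with hy | hy
  · rw [abs_of_nonneg hy]
  · have hsinh : -y ≤ sinh (-y) := self_le_sinh_iff.mpr (by linarith)
    rw [sinh_eq, neg_neg] at hsinh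
    rw [abs_of_neg hy]
    linarith

theorem exp_sub_sub_one_le_sq_mul {y b : ℝ} (hy : |y| ≤ b) :
    exp y - y - 1 ≤ y ^ 2 * ((exp b - b - 1) / b ^ 2) := by
  rcases (abs_nonneg y).trans hy |>.eq_or_lt with hb | hb
  · obtain rfl : y = 0 := abs_nonpos_iff.mp (hb ▸ hy)
    simp
  · have hmono := sq_mul_exp_sub_sub_one_le (abs_nonneg y) hy
    rw [sq_abs] at hmono
    calc exp y - y - 1 ≤ exp |y| - |y| - 1 := exp_sub_sub_one_le_exp_abs y
      _ ≤ y ^ 2 * ((exp b - b - 1) / b ^ 2) := by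
        rw [mul_div_assoc', le_div_iff₀ (by positivity)]
        linarith

theorem sq_exp_sub_one_le (s : ℝ) : (exp s - 1) ^ 2 ≤ exp (2 * s) - 2 * s - 1 := by
  have hexp : exp (2 * s) = exp s ^ 2 := by rw [← exp_nat_mul]; norm_num
  nlinarith [add_one_le_exp s]

end Real

theorem sq_prod_sub_one_le_card_mul_sum_sq_log {ι : Type*} [Fintype ι] {y : ι → ℝ} {c : ℝ}
    (hpos : ∀ i, 0 < y i) (hbd : ∀ i, |log (y i)| ≤ c) :
    (∏ i, y i - 1) ^ 2 ≤ 4 * ((exp (2 * Fintype.card ι * c) - 2 * Fintype.card ι * c - 1) /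
      (4 * Fintype.card ι ^ 2 * c ^ 2)) * (Fintype.card ι * ∑ i, log (y i) ^ 2) := by
  set n : ℝ := (Fintype.card ι : ℝ)
  set S := ∑ i, log (y i)
  have hprod : ∏ i, y i = exp S := by
    rw [exp_sum]
    exact prod_congr rfl fun i _ => (exp_log (hpos i)).symm
  have hS : |2 * S| ≤ 2 * n * c := by
    calc |2 * S| = 2 * |S| := by rw [abs_mul, abs_two]
      _ ≤ 2 * ∑ i, |log (y i)| := by gcongr; exact abs_sum_le_sum_abs _ _
      _ ≤ 2 * ∑ _i : ι, c := by gcongr with i; exact hbd i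
      _ = 2 * n * c := by rw [sum_const, card_univ, nsmul_eq_mul]; ring
  have hg : 0 ≤ (exp (2 * n * c) - 2 * n * c - 1) / (4 * n ^ 2 * c ^ 2) :=
    div_nonneg (by linarith [add_one_le_exp (2 * n * c)]) (by positivity)
  rw [hprod]
  calc (exp S - 1) ^ 2 ≤ exp (2 * S) - 2 * S - 1 := sq_exp_sub_one_le S
    _ ≤ (2 * S) ^ 2 * ((exp (2 * n * c) - 2 * n * c - 1) / (2 * n * c) ^ 2) :=
      exp_sub_sub_one_le_sq_mul hS
    _ = 4 * ((exp (2 * n * c) - 2 * n * c - 1) / (4 * n ^ 2 * c ^ 2)) * S ^ 2 := by ring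
    _ ≤ 4 * ((exp (2 * n * c) - 2 * n * c - 1) / (4 * n ^ 2 * c ^ 2)) *
        (n * ∑ i, log (y i) ^ 2) := by
      gcongr
      simpa using sq_sum_le_card_mul_sum_sq (s := univ) (f := fun i => log (y i))

theorem integrable_sq_of_abs_le {Ω : Type*} [MeasurableSpace Ω] {μ : Measure Ω}
    [IsFiniteMeasure μ] {f : Ω → ℝ} {c : ℝ} (hf : AEMeasurable f μ) (hbd : ∀ᵐ ω ∂μ, |f ω| ≤ c) :
    Integrable (fun ω => f ω ^ 2) μ := by
  refine .of_bound (hf.pow_const 2).aestronglyMeasurable (c ^ 2) ?_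
  filter_upwards [hbd] with ω hω
  rw [norm_pow, norm_eq_abs, ← sq_abs c]
  exact pow_le_pow_left₀ (abs_nonneg _) (hω.trans (le_abs_self c)) 2

theorem noisy_product_error_bound_general
    {Ω : Type*} [MeasurableSpace Ω] (μ : Measure Ω) [IsProbabilityMeasure μ]
    (T : ℕ) (c v : ℝ)
    (X : Fin T → Ω → ℝ)
    (hmeas : ∀ t, AEMeasurable (X t) μ)
    (hpos : ∀ t, ∀ᵐ ω ∂μ, 0 < 1 + X t ω)
    (hbd : ∀ t, ∀ᵐ ω ∂μ, |Real.log (1 + X t ω)| ≤ c)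
    (hvar : ∀ t, ∫ ω, (Real.log (1 + X t ω)) ^ 2 ∂μ ≤ v ^ 2) :
    ∫ ω, ((∏ t, (1 + X t ω)) - 1) ^ 2 ∂μ
      ≤ v ^ 2 * (4 + 64 * (T : ℝ) ^ 2 *
        ((Real.exp (2 * T * c) - 2 * T * c - 1) / (4 * T ^ 2 * c ^ 2))) := by
  set g := (exp (2 * T * c) - 2 * T * c - 1) / (4 * T ^ 2 * c ^ 2)
  have hg : 0 ≤ g := div_nonneg (by linarith [add_one_le_exp (2 * T * c)]) (by positivity)
  have hint : ∀ t, Integrable (fun ω => log (1 + X t ω) ^ 2) μ := fun t =>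
    integrable_sq_of_abs_le (measurable_log.comp_aemeasurable ((hmeas t).const_add 1)) (hbd t)
  have hpointwise : ∀ᵐ ω ∂μ,
      (∏ t, (1 + X t ω) - 1) ^ 2 ≤ 4 * g * (T * ∑ t, log (1 + X t ω) ^ 2) := by
    filter_upwards [ae_all_iff.mpr hpos, ae_all_iff.mpr hbd] with ω hposω hbdω
    simpa using sq_prod_sub_one_le_card_mul_sum_sq_log hposω hbdω
  calc ∫ ω, (∏ t, (1 + X t ω) - 1) ^ 2 ∂μ
      ≤ ∫ ω, 4 * g * (T * ∑ t, log (1 + X t ω) ^ 2) ∂μ :=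
        integral_mono_of_nonneg (.of_forall fun ω => sq_nonneg _)
          (((integrable_finsetSum _ fun t _ => hint t).const_mul _).const_mul _) hpointwise
    _ = 4 * g * (T * ∑ t, ∫ ω, log (1 + X t ω) ^ 2 ∂μ) := by
        rw [integral_const_mul, integral_const_mul, integral_finsetSum _ fun t _ => hint t]
    _ ≤ 4 * g * (T * ∑ _t : Fin T, v ^ 2) := by gcongr with t; exact hvar t
    _ ≤ v ^ 2 * (4 + 64 * T ^ 2 * g) := by
        rw [sum_const, card_univ, Fintype.card_fin, nsmul_eq_mul]
        nlinarith [mul_nonneg (mul_nonneg hg (sq_nonneg (T : ℝ))) (sq_nonneg v)]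

/-- Proposition 1 of the paper: mean-squared error of noisy products. -/
theorem noisy_product_error_bound
    {Ω : Type*} [MeasurableSpace Ω] (μ : Measure Ω) [IsProbabilityMeasure μ]
    (T : ℕ) (hT : 0 < T) (c v : ℝ) (hc : 0 < c) (hv : 0 < v)
    (X : Fin T → Ω → ℝ)
    (hmeas : ∀ t, AEMeasurable (X t) μ)
    (hpos : ∀ t, ∀ᵐ ω ∂μ, 0 < 1 + X t ω)
    (hbd : ∀ t, ∀ᵐ ω ∂μ, |Real.log (1 + X t ω)| ≤ c)
    (hvar : ∀ t, ∫ ω, (Real.log (1 + X t ω)) ^ 2 ∂μ ≤ v ^ 2)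
    (hsmall : v ^ 2 ≤ min 1
      ((4 * (T : ℝ) ^ 2 * ((Real.exp (2 * T * c) - 2 * T * c - 1) / (4 * T ^ 2 * c ^ 2)))⁻¹)) :
    ∫ ω, ((∏ t, (1 + X t ω)) - 1) ^ 2 ∂μ
      ≤ v ^ 2 * (4 + 64 * (T : ℝ) ^ 2 *
        ((Real.exp (2 * T * c) - 2 * T * c - 1) / (4 * T ^ 2 * c ^ 2))) :=
  noisy_product_error_bound_general μ T c v X hmeas hpos hbd hvar
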